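/- For every integer d ≥ 2, there exists a probability measure σ on ℝ^d whose characteristic function σ̂ is not the local uniform limit of any sequence of zero-free continuous functions: there is no sequence (f_n) of continuous functions f_n : ℝ^d → ℂ with f_n(p) ≠ 0 for all p, such that f_n → σ̂ uniformly on every compact subset of ℝ^d. -/

import Mathlib

/-!
Let `σ` be the uniform measure on the vertices `0`, `u + √3 v`, `-u + √3 v` of an equilateral
triangle, where `u, v` are orthonormal. Its characteristic function vanishes at `t₀ = (2π/3) u`
because `1 + ω + ω̄ = 0` for a primitive cube root of unity `ω`, and in the plane of `u, v`,
identified with `ℂ`, it equals `-(t - t₀)/√3 + O(|t - t₀|²)`. So on a small circle around `t₀` it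
winds once around the origin and has no continuous logarithm. A zero-free continuous function on
the simply connected space `ℝ^d` does have one, and a Rouché-type argument transfers continuous
logarithms to functions that are uniformly close relative to their size; hence no such function is
uniformly close to `σ̂` on that circle.
-/

open MeasureTheory Filter RealInnerProductSpace Complex Set BoundedContinuousFunction
open scoped Real ENNReal

section ContinuousLog

variable {X Y : Type*} [TopologicalSpace X] [TopologicalSpace Y]

def HasContinuousLog (φ : X → ℂ) : Prop :=
  ∃ h : X → ℂ, Continuous h ∧ ∀ x, exp (h x) = φ x

lemma HasContinuousLog.comp {φ : X → ℂ} (hφ : HasContinuousLog φ) {γ : Y → X}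
    (hγ : Continuous γ) : HasContinuousLog (φ ∘ γ) :=
  let ⟨h, hc, hexp⟩ := hφ
  ⟨h ∘ γ, hc.comp hγ, fun y => hexp (γ y)⟩

lemma HasContinuousLog.of_const_mul {φ : X → ℂ} {c : ℂ} (hc : c ≠ 0)
    (hcφ : HasContinuousLog fun x => c * φ x) : HasContinuousLog φ :=
  let ⟨h, hcont, hexp⟩ := hcφ
  ⟨fun x => h x - log c, hcont.sub continuous_const, fun x => by
    rw [exp_sub, hexp, exp_log hc, mul_div_cancel_left₀ _ hc]⟩

/-- The quotient `φ / ψ` stays in the disc `‖· - 1‖ < 1`, where the principal logarithm is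
continuous. -/
lemma HasContinuousLog.of_norm_sub_lt {φ ψ : X → ℂ} (hφ : HasContinuousLog φ)
    (hφc : Continuous φ) (hψc : Continuous ψ) (hφψ : ∀ x, ‖φ x - ψ x‖ < ‖ψ x‖) :
    HasContinuousLog ψ := by
  obtain ⟨h, hc, hexp⟩ := hφ
  have hψ0 x : ψ x ≠ 0 := fun h0 => (norm_nonneg _).not_gt (by simpa [h0] using hφψ x)
  have hratio x : φ x / ψ x ∈ slitPlane := by
    rw [← add_sub_cancel 1 (φ x / ψ x)]
    refine mem_slitPlane_of_norm_lt_one ?_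
    rw [← div_self (hψ0 x), ← sub_div, norm_div, div_lt_one (norm_pos_iff.2 (hψ0 x))]
    exact hφψ x
  refine ⟨fun x => h x - log (φ x / ψ x), hc.sub ((hφc.div hψc hψ0).clog hratio), fun x => ?_⟩
  rw [exp_sub, exp_log (slitPlane_ne_zero (hratio x)), hexp,
    div_div_cancel₀ (hexp x ▸ exp_ne_zero _)]

lemma hasContinuousLog_of_ne_zero [SimplyConnectedSpace X] [LocallyPathConnectedSpace X]
    {f : X → ℂ} (hf : Continuous f) (hf0 : ∀ x, f x ≠ 0) : HasContinuousLog f := by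
  obtain ⟨x₀⟩ := (inferInstance : Nonempty X)
  obtain ⟨F, ⟨-, hF⟩, -⟩ := isCoveringMapOn_exp.existsUnique_continuousMap_lifts ⟨f, hf⟩
    (exp_log (hf0 x₀)) hf0
  exact ⟨F, F.continuous, congrFun hF⟩

lemma not_hasContinuousLog_coe_circle : ¬ HasContinuousLog ((↑) : Circle → ℂ) := by
  rintro ⟨h, hc, hexp⟩
  -- `s ↦ h (exp (s I)) - s I` is continuous with values in `2πiℤ`, so it cannot drop by `2πi`
  -- over `[0, 2π]`.
  have hT : IsDiscrete (AddSubgroup.zmultiples (2 * π * I) : Set ℂ) :=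
    isDiscrete_iff_discreteTopology.2 (NormedSpace.discreteTopology_zmultiples _)
  have hconst := isPreconnected_univ.constant_of_mapsTo hT
    (f := fun s : ℝ => h (Circle.exp s) - s * I) (by fun_prop) ?_ (mem_univ 0) (mem_univ (2 * π))
  · simp [eq_sub_iff_add_eq, Real.pi_ne_zero] at hconst
  · intro s _
    rw [SetLike.mem_coe, AddSubgroup.mem_zmultiples_iff]
    have h1 := exp_sub (h (Circle.exp s)) (s * I)
    rw [hexp (Circle.exp s), Circle.coe_exp, div_self (exp_ne_zero _), exp_eq_one_iff] at h1
    simpa [eq_comm] using h1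

lemma not_tendstoUniformlyOn_of_not_hasContinuousLog
    [SimplyConnectedSpace X] [LocallyPathConnectedSpace X]
    {g : X → ℂ} {γ : Y → X} (hγ : Continuous γ) {ψ : Y → ℂ} (hψc : Continuous ψ)
    (hψ : ¬ HasContinuousLog ψ) {ε : ℝ} (hε : 0 < ε) (hg : ∀ y, ‖g (γ y) - ψ y‖ + ε ≤ ‖ψ y‖)
    {f : ℕ → X → ℂ} (hfc : ∀ n, Continuous (f n)) (hf0 : ∀ n x, f n x ≠ 0) :
    ¬ TendstoUniformlyOn f g atTop (range γ) := by
  intro hf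
  obtain ⟨n, hn⟩ := (Metric.tendstoUniformlyOn_iff.1 hf ε hε).exists
  refine hψ <| ((hasContinuousLog_of_ne_zero (hfc n) (hf0 n)).comp hγ).of_norm_sub_lt
    ((hfc n).comp hγ) hψc fun y => ?_
  calc ‖f n (γ y) - ψ y‖ ≤ ‖f n (γ y) - g (γ y)‖ + ‖g (γ y) - ψ y‖ :=
        norm_sub_le_norm_sub_add_norm_sub _ _ _
    _ < ε + ‖g (γ y) - ψ y‖ := by
      gcongr
      rw [← dist_eq_norm, dist_comm]
      exact hn _ (mem_range_self y)
    _ ≤ ‖ψ y‖ := by linarith [hg y]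

end ContinuousLog

lemma norm_exp_ofReal_mul_I_sub_one_sub_le {x : ℝ} (hx : |x| ≤ 1) :
    ‖exp (x * I) - 1 - x * I‖ ≤ x ^ 2 := by
  have hxI : ‖(x : ℂ) * I‖ = |x| := by simp
  simpa [hxI] using norm_exp_sub_one_sub_id_le (x := x * I) (hxI ▸ hx)

lemma exp_two_pi_div_three_mul_I : exp (↑(2 * π / 3) * I) = -1 / 2 + √3 / 2 * I := by
  have h : 2 * π / 3 = π - π / 3 := by ring
  rw [exp_mul_I, ← ofReal_cos, ← ofReal_sin, h, Real.cos_pi_sub, Real.sin_pi_sub,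
    Real.cos_pi_div_three, Real.sin_pi_div_three]
  push_cast
  ring

lemma exp_neg_two_pi_div_three_mul_I : exp (↑(-(2 * π / 3)) * I) = -1 / 2 - √3 / 2 * I := by
  have h : 2 * π / 3 = π - π / 3 := by ring
  rw [exp_mul_I, ← ofReal_cos, ← ofReal_sin, Real.cos_neg, Real.sin_neg, h, Real.cos_pi_sub,
    Real.sin_pi_sub, Real.cos_pi_div_three, Real.sin_pi_div_three]
  push_cast
  ring

lemma norm_one_add_exp_add_exp_add_le {z : ℂ} (hz : ‖z‖ ≤ 1 / 3) :
    ‖1 + exp (↑(2 * π / 3 + z.re + √3 * z.im) * I)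
      + exp (↑(-(2 * π / 3 + z.re) + √3 * z.im) * I) + √3 * z‖ ≤ 6 * ‖z‖ ^ 2 := by
  set x := z.re
  set y := z.im
  have hz2 : ‖z‖ ^ 2 = x ^ 2 + y ^ 2 := by rw [Complex.sq_norm, normSq_apply]; ring
  have hxy : x ^ 2 + y ^ 2 ≤ 1 / 9 := by nlinarith [norm_nonneg z]
  rw [hz2, ← re_add_im z]
  set P := x + √3 * y
  set Q := -x + √3 * y
  have hPQ : P ^ 2 + Q ^ 2 = 2 * x ^ 2 + 6 * y ^ 2 := by
    linear_combination 2 * y ^ 2 * Real.sq_sqrt (show (0 : ℝ) ≤ 3 by norm_num)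
  have hP : |P| ≤ 1 := (sq_le_one_iff_abs_le_one P).1 (by nlinarith [sq_nonneg Q])
  have hQ : |Q| ≤ 1 := (sq_le_one_iff_abs_le_one Q).1 (by nlinarith [sq_nonneg P])
  set ω := exp (↑(2 * π / 3) * I)
  set ω' := exp (↑(-(2 * π / 3)) * I)
  have hexpP : exp (↑(2 * π / 3 + x + √3 * y) * I) = ω * exp (P * I) := by
    rw [← exp_add]; push_cast [P]; ring_nf
  have hexpQ : exp (↑(-(2 * π / 3 + x) + √3 * y) * I) = ω' * exp (Q * I) := by
    rw [← exp_add]; push_cast [Q]; ring_nf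
  -- `1 + ω + ω' = 0` kills the constant terms, and `I (ω P + ω' Q) = -√3 (x + y I)`.
  have hidentity : 1 + ω * exp (P * I) + ω' * exp (Q * I) + √3 * (x + y * I) =
      ω * (exp (P * I) - 1 - P * I) + ω' * (exp (Q * I) - 1 - Q * I) := by
    rw [show ω = _ from exp_two_pi_div_three_mul_I, show ω' = _ from exp_neg_two_pi_div_three_mul_I]
    push_cast [P, Q]
    linear_combination (√3 * x : ℂ) * I_sq
  calc _ = ‖ω * (exp (P * I) - 1 - P * I) + ω' * (exp (Q * I) - 1 - Q * I)‖ := by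
        rw [hexpP, hexpQ, hidentity]
    _ ≤ ‖exp (P * I) - 1 - P * I‖ + ‖exp (Q * I) - 1 - Q * I‖ := by
      refine (norm_add_le _ _).trans_eq ?_
      simp only [norm_mul, ω, ω', norm_exp_ofReal_mul_I, one_mul]
    _ ≤ P ^ 2 + Q ^ 2 := add_le_add (norm_exp_ofReal_mul_I_sub_one_sub_le hP)
      (norm_exp_ofReal_mul_I_sub_one_sub_le hQ)
    _ ≤ 6 * (x ^ 2 + y ^ 2) := by nlinarith [sq_nonneg x]

section Triangle

variable {E : Type*} [NormedAddCommGroup E] [InnerProductSpace ℝ E]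

noncomputable def planeMap (u v : E) (z : ℂ) : E := z.re • u + z.im • v

lemma continuous_planeMap (u v : E) : Continuous (planeMap u v) := by
  unfold planeMap; fun_prop

lemma inner_planeMap_left {u v : E} (hu : ‖u‖ = 1) (hv : ‖v‖ = 1) (huv : ⟪u, v⟫ = 0) (z : ℂ) :
    ⟪u + √3 • v, planeMap u v z⟫ = z.re + √3 * z.im := by
  simp only [planeMap, inner_add_left, inner_add_right, real_inner_smul_left,
    real_inner_smul_right, real_inner_self_eq_norm_sq, hu, hv, huv, real_inner_comm u v]
  ring

lemma inner_planeMap_right {u v : E} (hu : ‖u‖ = 1) (hv : ‖v‖ = 1) (huv : ⟪u, v⟫ = 0) (z : ℂ) :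
    ⟪-u + √3 • v, planeMap u v z⟫ = -z.re + √3 * z.im := by
  simp only [planeMap, inner_add_left, inner_add_right, inner_neg_left, real_inner_smul_left,
    real_inner_smul_right, real_inner_self_eq_norm_sq, hu, hv, huv, real_inner_comm u v]
  ring

variable [MeasurableSpace E] [BorelSpace E]

noncomputable def triangleMeasure (u v : E) : Measure E :=
  (3 : ℝ≥0∞)⁻¹ • (Measure.dirac 0 + Measure.dirac (u + √3 • v) + Measure.dirac (-u + √3 • v))

instance (u v : E) : IsProbabilityMeasure (triangleMeasure u v) :=
  ⟨by simp [triangleMeasure, ENNReal.inv_three_add_inv_three]⟩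

lemma charFun_triangleMeasure (u v t : E) :
    charFun (triangleMeasure u v) t =
      (1 + exp (⟪u + √3 • v, t⟫ * I) + exp (⟪-u + √3 • v, t⟫ * I)) / 3 := by
  have hint (x : E) : Integrable (innerProbChar t) (Measure.dirac x) :=
    (innerProbChar t).integrable _
  rw [triangleMeasure, charFun_eq_integral_innerProbChar, integral_smul_measure,
    integral_add_measure ((hint _).add_measure (hint _)) (hint _),
    integral_add_measure (hint _) (hint _)]
  simp only [integral_dirac, innerProbChar_apply, inner_zero_left, ofReal_zero, zero_mul, exp_zero,
    ENNReal.toReal_inv, ENNReal.toReal_ofNat, real_smul, ofReal_inv, ofReal_ofNat]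
  ring

lemma norm_charFun_triangleMeasure_planeMap_add_le {u v : E} (hu : ‖u‖ = 1) (hv : ‖v‖ = 1)
    (huv : ⟪u, v⟫ = 0) {z : ℂ} (hz : ‖z‖ ≤ 1 / 3) :
    ‖charFun (triangleMeasure u v) (planeMap u v (↑(2 * π / 3) + z)) + √3 / 3 * z‖
      ≤ 2 * ‖z‖ ^ 2 := by
  rw [charFun_triangleMeasure, inner_planeMap_left hu hv huv, inner_planeMap_right hu hv huv]
  simp only [add_re, ofReal_re, add_im, ofReal_im, zero_add]
  set A := 1 + exp (↑(2 * π / 3 + z.re + √3 * z.im) * I)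
    + exp (↑(-(2 * π / 3 + z.re) + √3 * z.im) * I)
  rw [show A / 3 + √3 / 3 * z = (A + √3 * z) / 3 by ring, norm_div, RCLike.norm_ofNat]
  linarith [norm_one_add_exp_add_exp_add_le hz]

lemma norm_charFun_triangleMeasure_circle_sub_le {u v : E} (hu : ‖u‖ = 1) (hv : ‖v‖ = 1)
    (huv : ⟪u, v⟫ = 0) (w : Circle) :
    ‖charFun (triangleMeasure u v) (planeMap u v (↑(2 * π / 3) + w / 10)) - -(√3 / 30 : ℂ) * w‖
      + 1 / 100 ≤ ‖-(√3 / 30 : ℂ) * w‖ := by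
  have hw : ‖(w / 10 : ℂ)‖ = 1 / 10 := by simp [Circle.norm_coe]
  have hclose := norm_charFun_triangleMeasure_planeMap_add_le hu hv huv (z := w / 10)
    (by rw [hw]; norm_num)
  rw [hw] at hclose
  have hψ : ‖-(√3 / 30 : ℂ) * w‖ = √3 / 30 := by simp [Circle.norm_coe]
  rw [hψ, sub_eq_add_neg, show -(-(√3 / 30 : ℂ) * w) = √3 / 3 * (w / 10) by ring]
  nlinarith [Real.sq_sqrt (show (0 : ℝ) ≤ 3 by norm_num), Real.sqrt_nonneg 3]

end Triangle

lemma integral_exp_I_mul_inner_eq_charFun {E : Type*} [NormedAddCommGroup E]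
    [InnerProductSpace ℝ E] [MeasurableSpace E] (μ : Measure E) (t : E) :
    ∫ z, exp (I * ⟪t, z⟫) ∂μ = charFun μ t := by
  rw [charFun_apply]
  congr with z
  rw [real_inner_comm, mul_comm]

theorem exists_probMeasure_charFun_not_approx (d : ℕ) (hd : 2 ≤ d) :
    ∃ σ : Measure (EuclideanSpace ℝ (Fin d)), IsProbabilityMeasure σ ∧
      ¬ ∃ f : ℕ → EuclideanSpace ℝ (Fin d) → ℂ,
        (∀ n, Continuous (f n)) ∧
        (∀ n p, f n p ≠ 0) ∧
        (∀ K : Set (EuclideanSpace ℝ (Fin d)), IsCompact K →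
          TendstoUniformlyOn f
            (fun t => ∫ z, Complex.exp (Complex.I * (⟪t, z⟫ : ℝ)) ∂σ) atTop K) := by
  obtain ⟨u, v, hu, hv, huv⟩ :
      ∃ u v : EuclideanSpace ℝ (Fin d), ‖u‖ = 1 ∧ ‖v‖ = 1 ∧ ⟪u, v⟫ = 0 :=
    let e := EuclideanSpace.basisFun (Fin d) ℝ
    ⟨e ⟨0, by omega⟩, e ⟨1, by omega⟩, e.orthonormal.1 _, e.orthonormal.1 _,
      e.orthonormal.2 (by simp)⟩
  refine ⟨triangleMeasure u v, inferInstance, fun ⟨f, hfc, hf0, hf⟩ => ?_⟩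
  simp only [integral_exp_I_mul_inner_eq_charFun] at hf
  have hγ : Continuous fun w : Circle => planeMap u v (↑(2 * π / 3) + w / 10) :=
    (continuous_planeMap u v).comp (by fun_prop)
  exact not_tendstoUniformlyOn_of_not_hasContinuousLog hγ (by fun_prop)
    (fun h => not_hasContinuousLog_coe_circle (h.of_const_mul (by simp))) (by norm_num)
    (norm_charFun_triangleMeasure_circle_sub_le hu hv huv) hfc hf0 (hf _ (isCompact_range hγ))
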